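/- There exists an absolute constant C > 0 with the following property. Let T, U : (0,∞) → ℝ be functions and K > 0 a constant such that |T(y)| ≤ min(1, y^{−2}) for all y > 0, |U(y)| ≤ K·(1 + log(1/y)) for all 0 < y ≤ 1, and |U(y)| ≤ K·y^{−2} for all y > 1. Then for every real x ≥ 2 the double series converges and Σ_{m ≥ 1} Σ_{n ≥ 1} τ(m)·(log(2·gcd(m,n)))²·|T(n/x)|·|U(m/x²)| ≤ C·K·x³·log x. -/

import Mathlib

/-!
Expanding `τ(m) = #{(p, q) | p q = m}` and using `gcd(pq, n) ∣ gcd(p, n) gcd(q, n)`, the weight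
`log(2 gcd(m, n))²` splits, by the symmetry `p ↔ q`, into `4 log(2 gcd(p, n))²`. Writing
`p = d a`, `n = d b` with `d = gcd(p, n)` bounds the sum by
`4 Σ_d log(2d)² (Σ_b |T(db/x)|) (Σ_{a,q} |U(daq/x²)|)`.
The `T`-sum is `≤ 4x/d`. The `U`-sum is `≪ K (x²/d) log x`: for fixed `a` the sum over `q` is
`≪ K x²/(ad)` (or `≪ K (x²/(ad))²` once `ad > x²`), and the sum over `a` is harmonic. What
remains is the convergent series `Σ_d log(2d)²/d²`.

All series are nonnegative, so the estimate is carried out in `ℝ≥0∞`, where rearrangements need no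
summability hypotheses, and only transferred back to `ℝ` at the end.
-/

open Finset
open scoped ENNReal

lemma summable_and_tsum_le_of_tsum_ofReal_le {ι : Type*} {f : ι → ℝ} (hf : ∀ i, 0 ≤ f i)
    {B : ℝ} (hB : 0 ≤ B) (h : ∑' i, ENNReal.ofReal (f i) ≤ ENNReal.ofReal B) :
    Summable f ∧ ∑' i, f i ≤ B := by
  have hs : Summable f := by
    simpa [ENNReal.toReal_ofReal (hf _)] using
      ENNReal.summable_toReal (ne_top_of_le_ne_top ENNReal.ofReal_ne_top h)
  refine ⟨hs, ?_⟩
  rwa [← ENNReal.ofReal_tsum_of_nonneg hf hs, ENNReal.ofReal_le_ofReal_iff hB] at h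

lemma tsum_pnat_ofReal_eq_sum_range_floor {Z : ℝ} (hZ : 0 ≤ Z) (f : ℕ → ℝ)
    (hf_nonneg : ∀ k : ℕ, 0 < k → (k : ℝ) ≤ Z → 0 ≤ f k)
    (hf_nonpos : ∀ k : ℕ, Z < k → f k ≤ 0) :
    ∑' k : ℕ+, ENNReal.ofReal (f k) = ENNReal.ofReal (∑ i ∈ range ⌊Z⌋₊, f (i + 1)) := by
  rw [tsum_pnat_eq_tsum_succ (f := fun k => ENNReal.ofReal (f k)),
    tsum_eq_sum (s := range ⌊Z⌋₊), ENNReal.ofReal_sum_of_nonneg]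
  · intro i hi
    exact hf_nonneg _ i.succ_pos ((Nat.cast_le.2 (mem_range.1 hi)).trans (Nat.floor_le hZ))
  · intro i hi
    refine ENNReal.ofReal_of_nonpos (hf_nonpos _ ((Nat.lt_floor_add_one Z).trans_le ?_))
    exact_mod_cast Nat.succ_le_succ (not_lt.1 (mt mem_range.2 hi))

lemma tsum_ofReal_min_one_div_sq_le {Y : ℝ} (hY : 0 < Y) :
    ∑' k : ℕ+, ENNReal.ofReal (min 1 ((Y / k) ^ 2)) ≤ ENNReal.ofReal (4 * Y) := by
  rw [tsum_pnat_eq_tsum_succ (f := fun k : ℕ => ENNReal.ofReal (min 1 ((Y / k) ^ 2)))]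
  refine ENNReal.tsum_le_of_sum_range_le fun n => ?_
  -- the summands are dominated by a telescoping sum with `F i = Y ^ 2 / (i + Y)`
  set F : ℕ → ℝ := fun i => Y ^ 2 / (i + Y)
  have hstep (i : ℕ) : min 1 ((Y / (i + 1 : ℕ)) ^ 2) ≤ 4 * (F i - F (i + 1)) := by
    have hdiff : F i - F (i + 1) = Y ^ 2 / ((i + Y) * (i + 1 + Y)) := by
      simp only [F]; push_cast; field_simp; ring
    rw [hdiff]
    push_cast
    rcases le_total ((i : ℝ) + 1) Y with h | h
    · refine (min_le_left _ _).trans ?_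
      rw [← mul_div_assoc, le_div_iff₀ (by positivity)]
      nlinarith
    · refine (min_le_right _ _).trans ?_
      rw [div_pow, ← mul_div_assoc, div_le_div_iff₀ (by positivity) (by positivity)]
      have : (0 : ℝ) ≤ i := i.cast_nonneg
      nlinarith [mul_le_mul_of_nonneg_left h (sq_nonneg Y)]
  rw [← ENNReal.ofReal_sum_of_nonneg fun i _ => by positivity]
  refine ENNReal.ofReal_le_ofReal ((sum_le_sum fun i _ => hstep i).trans ?_)
  rw [← mul_sum, sum_range_sub']
  have : 0 ≤ F n := by positivity
  simp only [F, CharP.cast_eq_zero, zero_add, sq, mul_self_div_self] at this ⊢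
  linarith

-- `ENNReal.ofReal` truncates the negative terms `log (Z / k)`, `k > Z`, to `0`.
lemma tsum_ofReal_log_div_le {Z : ℝ} (hZ : 0 < Z) :
    ∑' k : ℕ+, ENNReal.ofReal (Real.log (Z / k)) ≤ ENNReal.ofReal Z := by
  rw [tsum_pnat_ofReal_eq_sum_range_floor hZ.le (fun k => Real.log (Z / k))
    (fun _ _ hkZ => Real.log_nonneg ((one_le_div (by positivity)).2 hkZ))
    (fun k hk => Real.log_nonpos (by positivity) ((div_le_one (hZ.trans hk)).2 hk.le))]
  refine ENNReal.ofReal_le_ofReal ?_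
  -- `∑_{k ≤ N} log (Z / k) = log (Z ^ N / N!)` and `Z ^ N / N! ≤ exp Z`
  set N := ⌊Z⌋₊
  have hprod : ∏ i ∈ range N, (Z / (i + 1 : ℕ)) = Z ^ N / N.factorial := by
    rw [prod_div_distrib, prod_const, card_range, ← prod_range_add_one_eq_factorial]
    push_cast; rfl
  calc ∑ i ∈ range N, Real.log (Z / (i + 1 : ℕ))
      = Real.log (Z ^ N / N.factorial) := by
        rw [← hprod, Real.log_prod fun i _ => by positivity]
    _ ≤ Real.log (Real.exp Z) :=
        Real.log_le_log (by positivity) (Real.pow_div_factorial_le_exp Z hZ.le N)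
    _ = Z := Real.log_exp Z

lemma tsum_ofReal_ite_inv_le {X : ℝ} (hX : 1 ≤ X) :
    ∑' k : ℕ+, ENNReal.ofReal (if (k : ℝ) ≤ X then (k : ℝ)⁻¹ else 0)
      ≤ ENNReal.ofReal (1 + Real.log X) := by
  rw [tsum_pnat_ofReal_eq_sum_range_floor (by linarith)
    (fun k => if (k : ℝ) ≤ X then (k : ℝ)⁻¹ else 0) (fun _ _ _ => by positivity)
    (fun _ hk => by rw [if_neg hk.not_ge])]
  refine ENNReal.ofReal_le_ofReal (le_of_eq_of_le ?_ (harmonic_floor_le_one_add_log X hX))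
  rw [harmonic]
  push_cast
  refine sum_congr rfl fun i hi => if_pos ?_
  exact_mod_cast (Nat.le_floor_iff (by linarith)).1 (mem_range.1 hi)

noncomputable def uMajorant (y : ℝ) : ℝ := if y ≤ 1 then 1 + Real.log (1 / y) else 1 / y ^ 2

lemma uMajorant_of_one_le {y : ℝ} (hy : 1 ≤ y) : uMajorant y = 1 / y ^ 2 := by
  rcases hy.eq_or_lt with rfl | hy
  · norm_num [uMajorant]
  · exact if_neg hy.not_ge

lemma abs_le_mul_uMajorant {U : ℝ → ℝ} {K : ℝ}
    (hU₁ : ∀ y : ℝ, 0 < y → y ≤ 1 → |U y| ≤ K * (1 + Real.log (1 / y)))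
    (hU₂ : ∀ y : ℝ, 1 < y → |U y| ≤ K / y ^ 2) {y : ℝ} (hy : 0 < y) :
    |U y| ≤ K * uMajorant y := by
  unfold uMajorant
  split_ifs with h
  · exact hU₁ y hy h
  · rw [mul_one_div]; exact hU₂ y (not_le.1 h)

lemma tsum_ofReal_uMajorant_div_le {W : ℝ} (hW : 0 < W) :
    ∑' q : ℕ+, ENNReal.ofReal (uMajorant (q / W)) ≤ ENNReal.ofReal (5 * W) := by
  have hpt (q : ℕ+) : ENNReal.ofReal (uMajorant (q / W))
      ≤ ENNReal.ofReal (min 1 ((W / q) ^ 2)) + ENNReal.ofReal (Real.log (W / q)) := by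
    have hq : (0 : ℝ) < q := by positivity
    rcases le_or_gt (q : ℝ) W with h | h
    · have h1 : 1 ≤ W / q := (one_le_div hq).2 h
      rw [uMajorant, if_pos ((div_le_one hW).2 h), one_div_div, min_eq_left (one_le_pow₀ h1),
        ENNReal.ofReal_add zero_le_one (Real.log_nonneg h1)]
    · rw [uMajorant_of_one_le ((one_le_div hW).2 h.le), one_div, ← inv_pow, inv_div,
        min_eq_right (pow_le_one₀ (by positivity) ((div_le_one hq).2 h.le))]
      exact le_self_add
  calc ∑' q : ℕ+, ENNReal.ofReal (uMajorant (q / W))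
      ≤ ∑' q : ℕ+,
          (ENNReal.ofReal (min 1 ((W / q) ^ 2)) + ENNReal.ofReal (Real.log (W / q))) :=
        ENNReal.tsum_le_tsum hpt
    _ ≤ ENNReal.ofReal (4 * W) + ENNReal.ofReal W := by
        rw [ENNReal.tsum_add]
        exact add_le_add (tsum_ofReal_min_one_div_sq_le hW) (tsum_ofReal_log_div_le hW)
    _ = ENNReal.ofReal (5 * W) := by
        rw [← ENNReal.ofReal_add (by positivity) hW.le]; ring_nf

lemma tsum_ofReal_uMajorant_div_le_of_le_one {W : ℝ} (hW : 0 < W) (hW₁ : W ≤ 1) :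
    ∑' q : ℕ+, ENNReal.ofReal (uMajorant (q / W)) ≤ ENNReal.ofReal (4 * W ^ 2) := by
  have hpt (q : ℕ+) : ENNReal.ofReal (uMajorant (q / W))
      = ENNReal.ofReal (W ^ 2) * ENNReal.ofReal (min 1 ((1 / q) ^ 2)) := by
    have hq : (1 : ℝ) ≤ q := by exact_mod_cast q.pos
    rw [uMajorant_of_one_le ((one_le_div hW).2 (hW₁.trans hq)),
      min_eq_right (pow_le_one₀ (by positivity) ((div_le_one (by positivity)).2 hq)),
      ← ENNReal.ofReal_mul (by positivity)]
    congr 1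
    field_simp
  calc ∑' q : ℕ+, ENNReal.ofReal (uMajorant (q / W))
      = ENNReal.ofReal (W ^ 2) * ∑' q : ℕ+, ENNReal.ofReal (min 1 ((1 / q) ^ 2)) := by
        simp_rw [hpt, ENNReal.tsum_mul_left]
    _ ≤ ENNReal.ofReal (W ^ 2) * ENNReal.ofReal (4 * 1) := by
        gcongr; exact tsum_ofReal_min_one_div_sq_le one_pos
    _ = ENNReal.ofReal (4 * W ^ 2) := by
        rw [← ENNReal.ofReal_mul (by positivity)]; ring_nf

lemma tsum_ofReal_uMajorant_mul_div_le {X Y : ℝ} (hY : 0 < Y) (hYX : Y ≤ X) (hX : 1 ≤ X) :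
    ∑' (p : ℕ+) (q : ℕ+), ENNReal.ofReal (uMajorant (p * q / Y))
      ≤ ENNReal.ofReal (21 * Y * (1 + Real.log X)) := by
  have hslice (p : ℕ+) : ∑' q : ℕ+, ENNReal.ofReal (uMajorant (p * q / Y))
      ≤ ENNReal.ofReal (5 * Y * if (p : ℝ) ≤ X then (p : ℝ)⁻¹ else 0)
        + ENNReal.ofReal (4 * min 1 ((Y / p) ^ 2)) := by
    have hp : (0 : ℝ) < p := by positivity
    have hW : 0 < Y / p := by positivity
    simp_rw [show ∀ q : ℝ, p * q / Y = q / (Y / p) from fun q => by field_simp]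
    rcases le_or_gt (p : ℝ) Y with h | h
    · rw [if_pos (h.trans hYX)]
      refine (tsum_ofReal_uMajorant_div_le hW).trans (le_of_eq_of_le ?_ le_self_add)
      ring_nf
    · have hW₁ : Y / p ≤ 1 := (div_le_one hp).2 h.le
      rw [min_eq_right (pow_le_one₀ hW.le hW₁)]
      exact (tsum_ofReal_uMajorant_div_le_of_le_one hW hW₁).trans le_add_self
  calc ∑' (p : ℕ+) (q : ℕ+), ENNReal.ofReal (uMajorant (p * q / Y))
      ≤ ∑' p : ℕ+, (ENNReal.ofReal (5 * Y * if (p : ℝ) ≤ X then (p : ℝ)⁻¹ else 0)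
          + ENNReal.ofReal (4 * min 1 ((Y / p) ^ 2))) := ENNReal.tsum_le_tsum hslice
    _ = ENNReal.ofReal (5 * Y) *
          ∑' p : ℕ+, ENNReal.ofReal (if (p : ℝ) ≤ X then (p : ℝ)⁻¹ else 0)
        + ENNReal.ofReal 4 * ∑' p : ℕ+, ENNReal.ofReal (min 1 ((Y / p) ^ 2)) := by
        simp_rw [ENNReal.tsum_add, ENNReal.ofReal_mul (by positivity : (0 : ℝ) ≤ 5 * Y),
          ENNReal.ofReal_mul (by norm_num : (0 : ℝ) ≤ 4), ENNReal.tsum_mul_left]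
    _ ≤ ENNReal.ofReal (5 * Y) * ENNReal.ofReal (1 + Real.log X)
        + ENNReal.ofReal 4 * ENNReal.ofReal (4 * Y) := by
        gcongr
        · exact tsum_ofReal_ite_inv_le hX
        · exact tsum_ofReal_min_one_div_sq_le hY
    _ ≤ ENNReal.ofReal (21 * Y * (1 + Real.log X)) := by
        have hlog : 0 ≤ Real.log X := Real.log_nonneg hX
        rw [← ENNReal.ofReal_mul (by positivity), ← ENNReal.ofReal_mul (by norm_num),
          ← ENNReal.ofReal_add (by positivity) (by positivity)]
        exact ENNReal.ofReal_le_ofReal (by nlinarith)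

noncomputable def mulFiberEquivDivisors (a : ℕ+) :
    {pq : ℕ+ × ℕ+ // pq.1 * pq.2 = a} ≃ (a : ℕ).divisors :=
  Equiv.ofBijective (fun z => ⟨z.1.1, Nat.mem_divisors.2
      ⟨⟨z.1.2, by rw [← PNat.mul_coe]; exact congrArg _ z.2.symm⟩, a.ne_zero⟩⟩) <| by
    constructor
    · rintro ⟨⟨p, q⟩, hpq⟩ ⟨⟨p', q'⟩, hpq'⟩ h
      obtain rfl : p = p' := PNat.coe_injective (by simpa using h)
      obtain rfl : q = q' := mul_left_cancel (hpq.trans hpq'.symm)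
      rfl
    · rintro ⟨d, hd⟩
      obtain ⟨⟨e, hde⟩, -⟩ := Nat.mem_divisors.1 hd
      have hd₀ : 0 < d := Nat.pos_of_dvd_of_pos ⟨e, hde⟩ a.pos
      have he₀ : 0 < e := Nat.pos_of_mul_pos_left (hde ▸ a.pos)
      exact ⟨⟨(⟨d, hd₀⟩, ⟨e, he₀⟩), PNat.coe_injective hde.symm⟩, rfl⟩

lemma tsum_card_divisors_mul (f : ℕ+ → ℝ≥0∞) :
    ∑' a : ℕ+, ((a : ℕ).divisors.card : ℝ≥0∞) * f a = ∑' (p : ℕ+) (q : ℕ+), f (p * q) := by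
  rw [← ENNReal.tsum_prod (f := fun p q => f (p * q)),
    ← (Equiv.sigmaFiberEquiv fun pq : ℕ+ × ℕ+ => pq.1 * pq.2).tsum_eq, ENNReal.tsum_sigma']
  refine tsum_congr fun a => ?_
  rw [tsum_congr fun z => congrArg f z.2, ENNReal.tsum_const,
    ENat.card_congr (mulFiberEquivDivisors a), ENat.card_eq_coe_fintype_card, Fintype.card_coe]
  rfl

lemma log_two_mul_sq_le_of_le_mul {a b c : ℝ} (ha : 1 ≤ a) (hb : 1 ≤ b) (hc : 1 ≤ c)
    (hcab : c ≤ a * b) :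
    Real.log (2 * c) ^ 2 ≤ 2 * Real.log (2 * a) ^ 2 + 2 * Real.log (2 * b) ^ 2 := by
  have h₀ : 0 ≤ Real.log (2 * c) := Real.log_nonneg (by linarith)
  have h₁ : Real.log (2 * c) ≤ Real.log (2 * a) + Real.log (2 * b) := by
    rw [← Real.log_mul (by positivity) (by positivity)]
    exact Real.log_le_log (by positivity) (by nlinarith)
  nlinarith [sq_nonneg (Real.log (2 * a) - Real.log (2 * b))]

lemma log_two_mul_gcd_mul_sq_le (p q n : ℕ+) :
    Real.log (2 * Nat.gcd (p * q) n) ^ 2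
      ≤ 2 * Real.log (2 * Nat.gcd p n) ^ 2 + 2 * Real.log (2 * Nat.gcd q n) ^ 2 := by
  have hdvd : Nat.gcd (p * q) n ∣ Nat.gcd p n * Nat.gcd q n := by
    rw [Nat.gcd_comm, Nat.gcd_comm p, Nat.gcd_comm q]
    exact gcd_mul_dvd_mul_gcd (n : ℕ) p q
  have one_le_gcd (k : ℕ+) : (1 : ℝ) ≤ Nat.gcd k n := by
    exact_mod_cast Nat.gcd_pos_of_pos_left _ k.pos
  refine log_two_mul_sq_le_of_le_mul (one_le_gcd p) (one_le_gcd q) (one_le_gcd (p * q)) ?_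
  exact_mod_cast Nat.le_of_dvd (by positivity) hdvd

lemma tsum_card_divisors_mul_log_gcd_le_four_mul (t u : ℕ+ → ℝ≥0∞) :
    ∑' mn : ℕ+ × ℕ+, ((mn.1 : ℕ).divisors.card : ℝ≥0∞) *
        ENNReal.ofReal (Real.log (2 * Nat.gcd mn.1 mn.2) ^ 2) * t mn.2 * u mn.1
      ≤ 4 * ∑' (p : ℕ+) (n : ℕ+),
        ENNReal.ofReal (Real.log (2 * Nat.gcd p n) ^ 2) * t n * ∑' q : ℕ+, u (p * q) := by
  set ℓ : ℕ → ℕ → ℝ≥0∞ := fun m n => ENNReal.ofReal (Real.log (2 * Nat.gcd m n) ^ 2)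
  have hℓ (p q n : ℕ+) : ℓ (p * q : ℕ+) n ≤ 2 * ℓ p n + 2 * ℓ q n := by
    simp only [ℓ]
    rw [← ENNReal.ofReal_ofNat 2, ← ENNReal.ofReal_mul zero_le_two,
      ← ENNReal.ofReal_mul zero_le_two, ← ENNReal.ofReal_add (by positivity) (by positivity),
      PNat.mul_coe]
    exact ENNReal.ofReal_le_ofReal (log_two_mul_gcd_mul_sq_le p q n)
  set S := ∑' (p : ℕ+) (q : ℕ+) (n : ℕ+), ℓ p n * t n * u (p * q)
  have hswap : ∑' (p : ℕ+) (q : ℕ+) (n : ℕ+), ℓ q n * t n * u (p * q) = S := by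
    rw [ENNReal.tsum_comm]
    exact tsum_congr fun p => tsum_congr fun q => by rw [mul_comm q p]
  calc ∑' mn : ℕ+ × ℕ+, ((mn.1 : ℕ).divisors.card : ℝ≥0∞) * ℓ mn.1 mn.2 * t mn.2 * u mn.1
      = ∑' m : ℕ+, ((m : ℕ).divisors.card : ℝ≥0∞) * ∑' n : ℕ+, ℓ m n * t n * u m := by
        rw [ENNReal.tsum_prod']
        simp_rw [← ENNReal.tsum_mul_left, mul_assoc]
    _ = ∑' (p : ℕ+) (q : ℕ+) (n : ℕ+), ℓ (p * q : ℕ+) n * t n * u (p * q) :=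
        tsum_card_divisors_mul _
    _ ≤ ∑' (p : ℕ+) (q : ℕ+) (n : ℕ+), (2 * ℓ p n + 2 * ℓ q n) * t n * u (p * q) :=
        ENNReal.tsum_le_tsum fun p => ENNReal.tsum_le_tsum fun q =>
          ENNReal.tsum_le_tsum fun n => by gcongr; exact hℓ p q n
    _ = 4 * S := by
        simp_rw [add_mul, ENNReal.tsum_add, mul_assoc, ENNReal.tsum_mul_left]
        simp_rw [← mul_assoc, hswap]
        ring
    _ = 4 * ∑' (p : ℕ+) (n : ℕ+), ℓ p n * t n * ∑' q : ℕ+, u (p * q) := by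
        congr 1
        refine tsum_congr fun p => ?_
        rw [ENNReal.tsum_comm]
        simp_rw [ENNReal.tsum_mul_left]

lemma tsum_log_gcd_le_tsum_gcd_mul (t v : ℕ+ → ℝ≥0∞) :
    ∑' (p : ℕ+) (n : ℕ+), ENNReal.ofReal (Real.log (2 * Nat.gcd p n) ^ 2) * t n * v p
      ≤ ∑' d : ℕ+, ENNReal.ofReal (Real.log (2 * d) ^ 2) *
          (∑' b : ℕ+, t (d * b)) * ∑' a : ℕ+, v (d * a) := by
  -- `(p, n) ↦ (gcd p n, p / gcd p n, n / gcd p n)` is a section of `(d, a, b) ↦ (d * a, d * b)`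
  let σ : ℕ+ × ℕ+ → ℕ+ × ℕ+ × ℕ+ := fun pn => (PNat.gcd pn.1 pn.2,
    (PNat.gcd_dvd_left pn.1 pn.2).choose, (PNat.gcd_dvd_right pn.1 pn.2).choose)
  have hσ₁ (pn : ℕ+ × ℕ+) : pn.1 = (σ pn).1 * (σ pn).2.1 :=
    (PNat.gcd_dvd_left pn.1 pn.2).choose_spec
  have hσ₂ (pn : ℕ+ × ℕ+) : pn.2 = (σ pn).1 * (σ pn).2.2 :=
    (PNat.gcd_dvd_right pn.1 pn.2).choose_spec
  have hσ : σ.Injective := fun pn pn' h =>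
    Prod.ext (by rw [hσ₁, hσ₁ pn', h]) (by rw [hσ₂, hσ₂ pn', h])
  let G : ℕ+ × ℕ+ × ℕ+ → ℝ≥0∞ := fun z =>
    ENNReal.ofReal (Real.log (2 * z.1) ^ 2) * t (z.1 * z.2.2) * v (z.1 * z.2.1)
  calc ∑' (p : ℕ+) (n : ℕ+), ENNReal.ofReal (Real.log (2 * Nat.gcd p n) ^ 2) * t n * v p
      = ∑' pn : ℕ+ × ℕ+, G (σ pn) := by
        rw [← ENNReal.tsum_prod]
        refine tsum_congr fun pn => ?_
        simp only [G, ← hσ₁, ← hσ₂, σ, PNat.gcd_coe]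
    _ ≤ ∑' z, G z := ENNReal.tsum_comp_le_tsum_of_injective hσ G
    _ = _ := by
        rw [ENNReal.tsum_prod']
        refine tsum_congr fun d => ?_
        rw [ENNReal.tsum_prod']
        simp_rw [G, ENNReal.tsum_mul_right, ENNReal.tsum_mul_left]

lemma tsum_card_divisors_mul_log_gcd_le (t u : ℕ+ → ℝ≥0∞) :
    ∑' mn : ℕ+ × ℕ+, ((mn.1 : ℕ).divisors.card : ℝ≥0∞) *
        ENNReal.ofReal (Real.log (2 * Nat.gcd mn.1 mn.2) ^ 2) * t mn.2 * u mn.1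
      ≤ 4 * ∑' d : ℕ+, ENNReal.ofReal (Real.log (2 * d) ^ 2) *
          (∑' b : ℕ+, t (d * b)) * ∑' (a : ℕ+) (q : ℕ+), u (d * a * q) :=
  (tsum_card_divisors_mul_log_gcd_le_four_mul t u).trans
    (mul_le_mul_right (tsum_log_gcd_le_tsum_gcd_mul t fun p => ∑' q : ℕ+, u (p * q)) 4)

lemma summable_log_two_mul_sq_div_sq :
    Summable fun d : ℕ+ => Real.log (2 * d) ^ 2 / (d : ℝ) ^ 2 := by
  have hpt (d : ℕ+) :
      Real.log (2 * d) ^ 2 / (d : ℝ) ^ 2 ≤ 25 * ((d : ℝ) ^ (3 / 2 : ℝ))⁻¹ := by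
    set s : ℝ := ((d : ℕ) : ℝ)
    have hs : 1 ≤ s := Nat.one_le_cast.2 d.pos
    have hr : 1 ≤ s ^ (1 / 4 : ℝ) := Real.one_le_rpow hs (by norm_num)
    have hlog : Real.log (2 * s) ≤ 5 * s ^ (1 / 4 : ℝ) := by
      have := Real.log_le_rpow_div (by positivity : 0 ≤ s) (by norm_num : (0 : ℝ) < 1 / 4)
      have := Real.log_two_lt_d9
      rw [Real.log_mul two_ne_zero (by positivity)]
      linarith
    have hsplit : (s ^ (1 / 4 : ℝ)) ^ 2 * s ^ (3 / 2 : ℝ) = s ^ 2 := by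
      rw [← Real.rpow_natCast, ← Real.rpow_mul (by positivity), ← Real.rpow_add (by positivity)]
      norm_num
    rw [div_le_iff₀ (by positivity), ← hsplit, mul_comm (_ ^ 2), ← mul_assoc,
      mul_assoc 25, inv_mul_cancel₀ (by positivity), mul_one]
    nlinarith [Real.log_nonneg (by linarith : (1 : ℝ) ≤ 2 * s)]
  refine Summable.of_nonneg_of_le (fun d => by positivity) hpt (Summable.mul_left 25 ?_)
  exact (Real.summable_nat_rpow_inv.2 (by norm_num)).comp_injective PNat.coe_injective

lemma tsum_ofReal_abs_comp_mul_div_le {T : ℝ → ℝ}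
    (hT : ∀ y : ℝ, 0 < y → |T y| ≤ min 1 (1 / y ^ 2)) {x : ℝ} (hx : 0 < x) (d : ℕ+) :
    ∑' b : ℕ+, ENNReal.ofReal |T ((d * b : ℕ+) / x)| ≤ ENNReal.ofReal (4 * (x / d)) := by
  calc ∑' b : ℕ+, ENNReal.ofReal |T ((d * b : ℕ+) / x)|
      ≤ ∑' b : ℕ+, ENNReal.ofReal (min 1 ((x / d / b) ^ 2)) :=
        ENNReal.tsum_le_tsum fun b => ENNReal.ofReal_le_ofReal <|
          (hT _ (by positivity)).trans_eq (by push_cast; field_simp)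
    _ ≤ ENNReal.ofReal (4 * (x / d)) := tsum_ofReal_min_one_div_sq_le (by positivity)

lemma tsum_ofReal_abs_comp_mul_mul_div_le {U : ℝ → ℝ} {K : ℝ} (hK : 0 ≤ K)
    (hU₁ : ∀ y : ℝ, 0 < y → y ≤ 1 → |U y| ≤ K * (1 + Real.log (1 / y)))
    (hU₂ : ∀ y : ℝ, 1 < y → |U y| ≤ K / y ^ 2) {x : ℝ} (hx : 1 ≤ x) (d : ℕ+) :
    ∑' (a : ℕ+) (q : ℕ+), ENNReal.ofReal |U ((d * a * q : ℕ+) / x ^ 2)|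
      ≤ ENNReal.ofReal (21 * K * (x ^ 2 / d) * (1 + Real.log (x ^ 2))) := by
  have hd : (1 : ℝ) ≤ d := Nat.one_le_cast.2 d.pos
  have hY : 0 < x ^ 2 / d := by positivity
  calc ∑' (a : ℕ+) (q : ℕ+), ENNReal.ofReal |U ((d * a * q : ℕ+) / x ^ 2)|
      ≤ ∑' (a : ℕ+) (q : ℕ+),
          ENNReal.ofReal K * ENNReal.ofReal (uMajorant (a * q / (x ^ 2 / d))) :=
        ENNReal.tsum_le_tsum fun a => ENNReal.tsum_le_tsum fun q => by
          rw [← ENNReal.ofReal_mul hK]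
          refine ENNReal.ofReal_le_ofReal
            ((abs_le_mul_uMajorant hU₁ hU₂ (by positivity)).trans_eq ?_)
          push_cast
          field_simp
    _ = ENNReal.ofReal K *
          ∑' (a : ℕ+) (q : ℕ+), ENNReal.ofReal (uMajorant (a * q / (x ^ 2 / d))) := by
        simp_rw [ENNReal.tsum_mul_left]
    _ ≤ ENNReal.ofReal K * ENNReal.ofReal (21 * (x ^ 2 / d) * (1 + Real.log (x ^ 2))) := by
        gcongr
        exact tsum_ofReal_uMajorant_mul_div_le hY (div_le_self (by positivity) hd)
          (one_le_pow₀ hx)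
    _ = ENNReal.ofReal (21 * K * (x ^ 2 / d) * (1 + Real.log (x ^ 2))) := by
        rw [← ENNReal.ofReal_mul hK]
        ring_nf

lemma tsum_ofReal_card_divisors_mul_log_gcd_abs_le {T U : ℝ → ℝ} {K : ℝ} (hK : 0 ≤ K)
    (hT : ∀ y : ℝ, 0 < y → |T y| ≤ min 1 (1 / y ^ 2))
    (hU₁ : ∀ y : ℝ, 0 < y → y ≤ 1 → |U y| ≤ K * (1 + Real.log (1 / y)))
    (hU₂ : ∀ y : ℝ, 1 < y → |U y| ≤ K / y ^ 2) {x : ℝ} (hx : 1 ≤ x) :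
    ∑' mn : ℕ+ × ℕ+, ENNReal.ofReal (((mn.1 : ℕ).divisors.card : ℝ) *
        Real.log (2 * Nat.gcd (mn.1 : ℕ) (mn.2 : ℕ)) ^ 2 *
        |T ((mn.2 : ℕ) / x)| * |U ((mn.1 : ℕ) / x ^ 2)|)
      ≤ ENNReal.ofReal (336 * K * x ^ 3 * (1 + Real.log (x ^ 2)) *
          ∑' d : ℕ+, Real.log (2 * d) ^ 2 / (d : ℝ) ^ 2) := by
  have hx₀ : 0 < x := by linarith
  set A := 336 * K * x ^ 3 * (1 + Real.log (x ^ 2))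
  have hA : 0 ≤ A := by have := Real.log_nonneg (one_le_pow₀ (n := 2) hx); positivity
  have hterm (d : ℕ+) : 4 * (ENNReal.ofReal (Real.log (2 * d) ^ 2) *
      ENNReal.ofReal (4 * (x / d)) * ENNReal.ofReal (21 * K * (x ^ 2 / d) * (1 + Real.log (x ^ 2))))
      = ENNReal.ofReal A * ENNReal.ofReal (Real.log (2 * d) ^ 2 / (d : ℝ) ^ 2) := by
    rw [← ENNReal.ofReal_mul (by positivity), ← ENNReal.ofReal_mul (by positivity),
      ← ENNReal.ofReal_ofNat 4, ← ENNReal.ofReal_mul (by positivity),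
      ← ENNReal.ofReal_mul hA]
    congr 1
    field_simp
    ring
  calc ∑' mn : ℕ+ × ℕ+, ENNReal.ofReal (((mn.1 : ℕ).divisors.card : ℝ) *
          Real.log (2 * Nat.gcd (mn.1 : ℕ) (mn.2 : ℕ)) ^ 2 *
          |T ((mn.2 : ℕ) / x)| * |U ((mn.1 : ℕ) / x ^ 2)|)
      = ∑' mn : ℕ+ × ℕ+, ((mn.1 : ℕ).divisors.card : ℝ≥0∞) *
          ENNReal.ofReal (Real.log (2 * Nat.gcd mn.1 mn.2) ^ 2) *
          ENNReal.ofReal |T ((mn.2 : ℕ) / x)| * ENNReal.ofReal |U ((mn.1 : ℕ) / x ^ 2)| := by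
        refine tsum_congr fun mn => ?_
        rw [ENNReal.ofReal_mul (by positivity), ENNReal.ofReal_mul (by positivity),
          ENNReal.ofReal_mul (by positivity), ENNReal.ofReal_natCast]
    _ ≤ 4 * ∑' d : ℕ+, ENNReal.ofReal (Real.log (2 * d) ^ 2) *
          (∑' b : ℕ+, ENNReal.ofReal |T ((d * b : ℕ+) / x)|) *
          ∑' (a : ℕ+) (q : ℕ+), ENNReal.ofReal |U ((d * a * q : ℕ+) / x ^ 2)| :=
        tsum_card_divisors_mul_log_gcd_le (fun n => ENNReal.ofReal |T ((n : ℕ) / x)|)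
          (fun m => ENNReal.ofReal |U ((m : ℕ) / x ^ 2)|)
    _ ≤ 4 * ∑' d : ℕ+, ENNReal.ofReal (Real.log (2 * d) ^ 2) * ENNReal.ofReal (4 * (x / d)) *
          ENNReal.ofReal (21 * K * (x ^ 2 / d) * (1 + Real.log (x ^ 2))) := by
        gcongr with d
        · exact tsum_ofReal_abs_comp_mul_div_le hT hx₀ d
        · exact tsum_ofReal_abs_comp_mul_mul_div_le hK hU₁ hU₂ hx d
    _ = ENNReal.ofReal (A * ∑' d : ℕ+, Real.log (2 * d) ^ 2 / (d : ℝ) ^ 2) := by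
        rw [← ENNReal.tsum_mul_left, ENNReal.ofReal_mul hA,
          ENNReal.ofReal_tsum_of_nonneg (fun d => by positivity) summable_log_two_mul_sq_div_sq]
        simp_rw [hterm, ENNReal.tsum_mul_left]

theorem stmt_17 :
    ∃ C : ℝ, 0 < C ∧ ∀ (T U : ℝ → ℝ) (K : ℝ), 0 < K →
      (∀ y : ℝ, 0 < y → |T y| ≤ min 1 (1 / y ^ 2)) →
      (∀ y : ℝ, 0 < y → y ≤ 1 → |U y| ≤ K * (1 + Real.log (1 / y))) →
      (∀ y : ℝ, 1 < y → |U y| ≤ K / y ^ 2) →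
      ∀ x : ℝ, 2 ≤ x →
        Summable (fun mn : ℕ+ × ℕ+ =>
          (((mn.1 : ℕ).divisors.card : ℝ)) *
            Real.log (2 * Nat.gcd (mn.1 : ℕ) (mn.2 : ℕ)) ^ 2 *
            |T ((mn.2 : ℕ) / x)| * |U ((mn.1 : ℕ) / x ^ 2)|) ∧
        (∑' mn : ℕ+ × ℕ+,
          (((mn.1 : ℕ).divisors.card : ℝ)) *
            Real.log (2 * Nat.gcd (mn.1 : ℕ) (mn.2 : ℕ)) ^ 2 *
            |T ((mn.2 : ℕ) / x)| * |U ((mn.1 : ℕ) / x ^ 2)|)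
          ≤ C * K * x ^ 3 * Real.log x := by
  set Z := ∑' d : ℕ+, Real.log (2 * d) ^ 2 / (d : ℝ) ^ 2
  have hZ : 0 ≤ Z := tsum_nonneg fun d => by positivity
  refine ⟨1344 * (Z + 1), by positivity, fun T U K hK hT hU₁ hU₂ x hx => ?_⟩
  have hlog : 1 / 2 ≤ Real.log x := by
    linarith [Real.log_two_gt_d9, Real.log_le_log two_pos hx]
  have hKx : 0 ≤ K * x ^ 3 := by positivity
  -- `1 + log (x ^ 2) = 1 + 2 log x ≤ 4 log x` as `log x ≥ log 2 > 1 / 2`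
  have hconst : 336 * K * x ^ 3 * (1 + Real.log (x ^ 2)) * Z
      ≤ 1344 * (Z + 1) * K * x ^ 3 * Real.log x := by
    rw [Real.log_pow]
    push_cast
    nlinarith [mul_nonneg hKx hZ, mul_nonneg hKx (by linarith : 0 ≤ Real.log x),
      mul_nonneg (mul_nonneg hKx hZ) (by linarith : 0 ≤ Real.log x - 1 / 2)]
  exact summable_and_tsum_le_of_tsum_ofReal_le (fun mn => by positivity) (by positivity)
    ((tsum_ofReal_card_divisors_mul_log_gcd_abs_le hK.le hT hU₁ hU₂ (by linarith)).trans
      (ENNReal.ofReal_le_ofReal hconst))
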